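/- arXiv:1707.07871 — 2 statements merged into one kernel-verified Lean document; each statement's English description precedes it below -/
import Mathlib

section
/- Let g : [-1,1] → ℝ be nonnegative, increasing and concave on [-1,1], normalized so that (1/π)∫_{-1}^{1} g(t)/√(1-t²) dt = 1. Then: (a) the function t ↦ g(t)/(1+t) is decreasing on (-1,1]; (b) g(1) ≤ 2; (c) g(0) ≥ 1. -/
/-!
With the arcsine weight `w(s) = 1 / √(1 - s²)`, which has total mass `∫ w = π` (it is the
derivative of `arcsin`), the normalisation reads `∫ g w = π`.

(a) For a concave `f` with `f a ≥ 0`, `f x / (x - a)` is the secant slope `(f x - f a) / (x - a)`,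
antitone by concavity, plus `f a / (x - a)`, antitone as `f a ≥ 0`; take `a = -1`.

(b), (c) Since `w` is even, `∫ (g(x) + g(-x)) w = 2π`. By (a), `g(x) ≥ g(1) (1 + x) / 2` and
`g(-x) ≥ g(1) (1 - x) / 2`, so `g(x) + g(-x) ≥ g(1)`; by concavity `g(x) + g(-x) ≤ 2 g(0)`.
Integrating these against `w` gives `g(1) π ≤ 2π ≤ 2 g(0) π`.
-/

open Real MeasureTheory Set

theorem ConcaveOn.antitoneOn_div_sub {𝕜 : Type*} [Field 𝕜] [LinearOrder 𝕜]
    [IsStrictOrderedRing 𝕜] {s : Set 𝕜} {f : 𝕜 → 𝕜} {a : 𝕜} (hf : ConcaveOn 𝕜 s f) (ha : a ∈ s)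
    (hfa : 0 ≤ f a) : AntitoneOn (fun x => f x / (x - a)) (s ∩ Ioi a) := by
  intro x ⟨hxs, hxa⟩ y ⟨hys, hya⟩ hxy
  have hsecant : (f y - f a) / (y - a) ≤ (f x - f a) / (x - a) := by
    have := hf.neg.secant_mono ha hxs hys hxa.ne' hya.ne' hxy
    rwa [Pi.neg_apply, Pi.neg_apply, Pi.neg_apply, neg_sub_neg, neg_sub_neg, ← neg_sub (f x),
      ← neg_sub (f y), neg_div, neg_div, neg_le_neg_iff] at this
  have hconst : f a / (y - a) ≤ f a / (x - a) :=
    div_le_div_of_nonneg_left hfa (sub_pos.2 hxa) (sub_le_sub_right hxy a)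
  calc f y / (y - a) = (f y - f a) / (y - a) + f a / (y - a) := by ring
    _ ≤ (f x - f a) / (x - a) + f a / (x - a) := add_le_add hsecant hconst
    _ = f x / (x - a) := by ring

theorem ConcaveOn.add_comp_neg_le {E : Type*} [AddCommGroup E] [Module ℝ E] {s : Set E}
    {f : E → ℝ} (hf : ConcaveOn ℝ s f) {x : E} (hx : x ∈ s) (hnx : -x ∈ s) :
    f x + f (-x) ≤ 2 * f 0 := by
  have := hf.2 hx hnx (by norm_num : (0:ℝ) ≤ 1 / 2) (by norm_num : (0:ℝ) ≤ 1 / 2) (by norm_num)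
  simp only [smul_neg, add_neg_cancel, smul_eq_mul] at this
  linarith

theorem IntervalIntegrable.add_comp_neg {f : ℝ → ℝ} {a : ℝ}
    (hf : IntervalIntegrable f volume (-a) a) :
    IntervalIntegrable (fun x => f x + f (-x)) volume (-a) a :=
  hf.add (by simpa using ((IntervalIntegrable.iff_comp_neg (f := f)).1 hf).symm)

theorem intervalIntegral.integral_add_comp_neg {f : ℝ → ℝ} {a : ℝ}
    (hf : IntervalIntegrable f volume (-a) a) :
    ∫ x in (-a)..a, (f x + f (-x)) = 2 * ∫ x in (-a)..a, f x := by
  rw [intervalIntegral.integral_add hf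
      (by simpa using ((IntervalIntegrable.iff_comp_neg (f := f)).1 hf).symm),
    intervalIntegral.integral_comp_neg, neg_neg]
  ring

theorem intervalIntegrable_one_div_sqrt_one_sub_sq :
    IntervalIntegrable (fun x => 1 / √(1 - x ^ 2)) volume (-1) 1 := by
  refine intervalIntegral.intervalIntegrable_deriv_of_nonneg continuous_arcsin.continuousOn
    (fun x hx => hasDerivAt_arcsin ?_ ?_) (fun _ _ => by positivity)
  all_goals norm_num at hx; linarith [hx.1, hx.2]

theorem integral_one_div_sqrt_one_sub_sq : ∫ x in (-1:ℝ)..1, 1 / √(1 - x ^ 2) = π := by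
  rw [intervalIntegral.integral_eq_sub_of_hasDerivAt_of_le (by norm_num)
    continuous_arcsin.continuousOn (fun x hx => hasDerivAt_arcsin (by linarith [hx.1])
    (by linarith [hx.2])) intervalIntegrable_one_div_sqrt_one_sub_sq, arcsin_one, arcsin_neg_one]
  ring

theorem MonotoneOn.intervalIntegrable_div_sqrt_one_sub_sq {f : ℝ → ℝ}
    (hf : MonotoneOn f (Icc (-1) 1)) :
    IntervalIntegrable (fun x => f x / √(1 - x ^ 2)) volume (-1) 1 := by
  have hfi : IntervalIntegrable f volume (-1) 1 :=
    MonotoneOn.intervalIntegrable (by rwa [uIcc_of_le (by norm_num)])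
  have hbound : ∀ x ∈ Ioc (-1:ℝ) 1, ‖f x‖ ≤ max |f (-1)| |f 1| := fun x hx => by
    have hx' := Ioc_subset_Icc_self hx
    have hlo := hf (left_mem_Icc.2 (by norm_num)) hx' hx'.1
    have hhi := hf hx' (right_mem_Icc.2 (by norm_num)) hx'.2
    rw [Real.norm_eq_abs, abs_le]
    constructor <;> linarith [neg_abs_le (f (-1)), le_abs_self (f 1),
      le_max_left |f (-1)| |f 1|, le_max_right |f (-1)| |f 1|]
  have hw := intervalIntegrable_one_div_sqrt_one_sub_sq
  simp only [div_eq_mul_one_div (f _)]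
  rw [intervalIntegrable_iff_integrableOn_Ioc_of_le (by norm_num)] at hfi hw ⊢
  exact hw.bdd_mul hfi.aestronglyMeasurable
    ((ae_restrict_iff' measurableSet_Ioc).2 (ae_of_all _ hbound))

theorem mul_pi_le_integral_div_sqrt_one_sub_sq {f : ℝ → ℝ} {c : ℝ}
    (hf : IntervalIntegrable (fun x => f x / √(1 - x ^ 2)) volume (-1) 1)
    (h : ∀ x ∈ Ioo (-1:ℝ) 1, c ≤ f x) : c * π ≤ ∫ x in (-1:ℝ)..1, f x / √(1 - x ^ 2) := by
  rw [← integral_one_div_sqrt_one_sub_sq, ← intervalIntegral.integral_const_mul]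
  refine intervalIntegral.integral_mono_on_of_le_Ioo (by norm_num)
    (intervalIntegrable_one_div_sqrt_one_sub_sq.const_mul c) hf fun x hx => ?_
  rw [mul_one_div]
  exact div_le_div_of_nonneg_right (h x hx) (sqrt_nonneg _)

theorem integral_div_sqrt_one_sub_sq_le_mul_pi {f : ℝ → ℝ} {c : ℝ}
    (hf : IntervalIntegrable (fun x => f x / √(1 - x ^ 2)) volume (-1) 1)
    (h : ∀ x ∈ Ioo (-1:ℝ) 1, f x ≤ c) : ∫ x in (-1:ℝ)..1, f x / √(1 - x ^ 2) ≤ c * π := by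
  rw [← integral_one_div_sqrt_one_sub_sq, ← intervalIntegral.integral_const_mul]
  refine intervalIntegral.integral_mono_on_of_le_Ioo (by norm_num)
    hf (intervalIntegrable_one_div_sqrt_one_sub_sq.const_mul c) fun x hx => ?_
  rw [mul_one_div]
  exact div_le_div_of_nonneg_right (h x hx) (sqrt_nonneg _)

theorem le_add_comp_neg_of_antitoneOn_div {g : ℝ → ℝ}
    (hg : AntitoneOn (fun s => g s / (1 + s)) (Ioc (-1) 1)) {x : ℝ} (hx : x ∈ Ioo (-1:ℝ) 1) :
    g 1 ≤ g x + g (-x) := by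
  have h1 : (1:ℝ) ∈ Ioc (-1) 1 := right_mem_Ioc.2 (by norm_num)
  have hpos := hg ⟨hx.1, hx.2.le⟩ h1 hx.2.le
  have hneg := hg (a := -x) ⟨by linarith [hx.2], by linarith [hx.1]⟩ h1 (by linarith [hx.1])
  simp only at hpos hneg
  rw [div_le_div_iff₀ (by norm_num) (by linarith [hx.1])] at hpos
  rw [div_le_div_iff₀ (by norm_num) (by linarith [hx.2])] at hneg
  linarith

theorem stmt_7 (g : ℝ → ℝ)
    (hg0 : ∀ x ∈ Set.Icc (-1:ℝ) 1, 0 ≤ g x)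
    (hgmono : MonotoneOn g (Set.Icc (-1:ℝ) 1))
    (hgconc : ConcaveOn ℝ (Set.Icc (-1:ℝ) 1) g)
    (hnorm : (1 / π) * ∫ s in (-1:ℝ)..1, g s / Real.sqrt (1 - s ^ 2) = 1) :
    AntitoneOn (fun s => g s / (1 + s)) (Set.Ioc (-1:ℝ) 1) ∧ g 1 ≤ 2 ∧ 1 ≤ g 0 := by
  have hm1 : (-1:ℝ) ∈ Icc (-1) 1 := left_mem_Icc.2 (by norm_num)
  have hanti : AntitoneOn (fun s => g s / (1 + s)) (Ioc (-1) 1) := fun x hx y hy hxy => by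
    simpa only [sub_neg_eq_add, add_comm _ (1:ℝ)] using hgconc.antitoneOn_div_sub hm1 (hg0 _ hm1)
      ⟨Ioc_subset_Icc_self hx, hx.1⟩ ⟨Ioc_subset_Icc_self hy, hy.1⟩ hxy
  have hint : ∫ s in (-1:ℝ)..1, g s / √(1 - s ^ 2) = π := by
    field_simp at hnorm; linarith
  have hsymm_eq : (fun x => (g x + g (-x)) / √(1 - x ^ 2))
      = fun x => g x / √(1 - x ^ 2) + g (-x) / √(1 - (-x) ^ 2) := by
    funext x; rw [neg_sq, add_div]
  have hF := hgmono.intervalIntegrable_div_sqrt_one_sub_sq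
  have hsymm_int : IntervalIntegrable (fun x => (g x + g (-x)) / √(1 - x ^ 2)) volume (-1) 1 := by
    rw [hsymm_eq]; exact hF.add_comp_neg
  have hsymm : ∫ x in (-1:ℝ)..1, (g x + g (-x)) / √(1 - x ^ 2) = 2 * π := by
    rw [hsymm_eq, intervalIntegral.integral_add_comp_neg hF, hint]
  refine ⟨hanti, ?_, ?_⟩
  · have := mul_pi_le_integral_div_sqrt_one_sub_sq hsymm_int
      fun x hx => le_add_comp_neg_of_antitoneOn_div hanti hx
    nlinarith [pi_pos]
  · have := integral_div_sqrt_one_sub_sq_le_mul_pi hsymm_int fun x hx =>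
      hgconc.add_comp_neg_le (Ioo_subset_Icc_self hx) ⟨by linarith [hx.2], by linarith [hx.1]⟩
    nlinarith [pi_pos]
end

section
/- For every j ∈ {1,…,k-1} one has (α_{j+1} - α_j)/α_j ≤ 1/j, and for every j ∈ {0,1,…,k-1} one has (α_{j+1} - α_j)/α_{j+1} ≤ 1/(j+1). -/
open Real MeasureTheory Set

lemma aux_int01 : IntervalIntegrable (fun s : ℝ => 1 / Real.sqrt (1 - s ^ 2)) volume 0 1 := by
  have hb : IntervalIntegrable (fun s : ℝ => (1 - s) ^ (-(1/2) : ℝ)) volume 0 1 := by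
    have h := (intervalIntegral.intervalIntegrable_rpow' (a := (0:ℝ)) (b := 1)
      (r := -(1/2)) (by norm_num)).comp_sub_left 1
    simpa using h.symm
  refine hb.mono_fun ?_ ?_
  · exact (measurable_const.div
      ((continuous_const.sub (continuous_pow 2)).sqrt.measurable)).aestronglyMeasurable
  · filter_upwards [ae_restrict_mem measurableSet_uIoc] with x hx
    rw [Set.uIoc_of_le (by norm_num : (0:ℝ) ≤ 1)] at hx
    rcases eq_or_lt_of_le hx.2 with h1 | h1
    · subst h1; norm_num [Real.zero_rpow]
    · have h0 : (0:ℝ) < 1 - x := by linarith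
      have hxx : 1 - x ≤ 1 - x ^ 2 := by nlinarith [hx.1.le]
      have hs1 : 0 < Real.sqrt (1 - x) := Real.sqrt_pos.2 h0
      have hs2 : Real.sqrt (1 - x) ≤ Real.sqrt (1 - x ^ 2) := Real.sqrt_le_sqrt hxx
      have hrw : (1 - x) ^ (-(1/2) : ℝ) = (Real.sqrt (1 - x))⁻¹ := by
        rw [Real.sqrt_eq_rpow, ← Real.rpow_neg h0.le]
      rw [Real.norm_eq_abs, Real.norm_eq_abs, abs_of_nonneg (by positivity),
        abs_of_nonneg (Real.rpow_nonneg h0.le _), hrw, one_div]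
      exact inv_anti₀ hs1 hs2

lemma aux_intFull : IntervalIntegrable (fun s : ℝ => 1 / Real.sqrt (1 - s ^ 2)) volume (-1) 1 := by
  have h2 : IntervalIntegrable (fun s : ℝ => 1 / Real.sqrt (1 - s ^ 2)) volume 0 (-1) := by
    have h := aux_int01.comp_sub_left 0
    simpa [zero_sub, neg_sq] using h
  exact h2.symm.trans aux_int01

lemma aux_integral {a b : ℝ} (ha : -1 ≤ a) (hb : b ≤ 1) (hab : a ≤ b) :
    ∫ s in a..b, 1 / Real.sqrt (1 - s ^ 2) = Real.arcsin b - Real.arcsin a := by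
  refine intervalIntegral.integral_eq_sub_of_hasDerivAt_of_le hab
    Real.continuous_arcsin.continuousOn (fun x hx => ?_) (aux_intFull.mono_set ?_)
  · exact Real.hasDerivAt_arcsin (by nlinarith [hx.1, hx.2] : x ≠ -1)
      (by nlinarith [hx.1, hx.2] : x ≠ 1)
  · rw [Set.uIcc_of_le hab, Set.uIcc_of_le (by linarith : (-1:ℝ) ≤ 1)]
    exact Set.Icc_subset_Icc ha hb

theorem stmt_10 (k : ℕ) (hk : 2 ≤ k) (g : ℝ → ℝ)
    (hg0 : ∀ x ∈ Set.Icc (-1:ℝ) 1, 0 ≤ g x)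
    (hgmono : MonotoneOn g (Set.Icc (-1:ℝ) 1))
    (hgconc : ConcaveOn ℝ (Set.Icc (-1:ℝ) 1) g)
    (hgconv : ConvexOn ℝ (Set.Ioo (-1:ℝ) 1) (fun s => g s / (1 + s)))
    (hnorm : (1 / π) * ∫ s in (-1:ℝ)..1, g s / Real.sqrt (1 - s ^ 2) = 1)
    (t : ℕ → ℝ)
    (ht0 : t 0 = -1) (htk : t k = 1)
    (htmem : ∀ j ≤ k, t j ∈ Set.Icc (-1:ℝ) 1)
    (htmono : ∀ i j : ℕ, i < j → j ≤ k → t i < t j)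
    (htW : ∀ j ≤ k,
      ((k : ℝ) / π) * ∫ s in (-1:ℝ)..(t j), g s / Real.sqrt (1 - s ^ 2) = (j : ℝ))
    (α : ℕ → ℝ) (hα : ∀ j ≤ k, α j = Real.arccos (-(t j)))
    :
    (∀ j : ℕ, 1 ≤ j → j < k → (α (j + 1) - α j) / α j ≤ 1 / (j : ℝ)) ∧
    (∀ j : ℕ, j < k → (α (j + 1) - α j) / α (j + 1) ≤ 1 / ((j : ℝ) + 1)) := by
  have hπ : (0:ℝ) < π := Real.pi_pos
  have hk0 : (0:ℝ) < (k:ℝ) := by exact_mod_cast (by omega : 0 < k)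
  set G : ℝ → ℝ := fun s => g s / Real.sqrt (1 - s ^ 2) with hGdef
  have hI : ∀ j ≤ k, ∫ s in (-1:ℝ)..(t j), G s = (j:ℝ) * (π / k) := by
    intro j hj
    have h := htW j hj
    have hk0' : (k:ℝ) ≠ 0 := ne_of_gt hk0
    have hπ0 : π ≠ 0 := Real.pi_ne_zero
    field_simp at h ⊢
    linear_combination h
  have hGint : ∀ c ∈ Set.Icc (-1:ℝ) 1, IntervalIntegrable G volume (-1) c := by
    intro c hc
    have hsub : Set.uIcc (-1:ℝ) c ⊆ Set.uIcc (-1:ℝ) 1 := by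
      rw [Set.uIcc_of_le hc.1, Set.uIcc_of_le (by norm_num : (-1:ℝ) ≤ 1)]
      exact Set.Icc_subset_Icc le_rfl hc.2
    have hB : IntervalIntegrable (fun s : ℝ => g 1 * (1 / Real.sqrt (1 - s ^ 2))) volume (-1) c :=
      (aux_intFull.mono_set hsub).const_mul (g 1)
    refine hB.mono_fun ?_ ?_
    · have hg' : AEMeasurable g (volume.restrict (Set.uIoc (-1:ℝ) c)) := by
        have h1 := aemeasurable_restrict_of_monotoneOn (μ := volume) measurableSet_Icc hgmono
        refine h1.mono_measure (Measure.restrict_mono ?_ le_rfl)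
        rw [Set.uIoc_of_le hc.1]
        exact Set.Ioc_subset_Icc_self.trans (Set.Icc_subset_Icc le_rfl hc.2)
      have hsq : Measurable fun s : ℝ => Real.sqrt (1 - s ^ 2) :=
        (continuous_const.sub (continuous_pow 2)).sqrt.measurable
      exact (hg'.div hsq.aemeasurable).aestronglyMeasurable
    · filter_upwards [ae_restrict_mem measurableSet_uIoc] with x hx
      rw [Set.uIoc_of_le hc.1] at hx
      have hx' : x ∈ Set.Icc (-1:ℝ) 1 := ⟨hx.1.le, hx.2.trans hc.2⟩
      have h1 : g x ≤ g 1 := hgmono hx' (Set.right_mem_Icc.2 (by norm_num)) hx'.2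
      have h0 : 0 ≤ g x := hg0 x hx'
      have : G x = g x * (1 / Real.sqrt (1 - x ^ 2)) := by
        simp only [hGdef]; rw [div_eq_mul_one_div]
      rw [Real.norm_eq_abs, Real.norm_eq_abs, this,
        abs_of_nonneg (mul_nonneg h0 (by positivity)),
        abs_of_nonneg (mul_nonneg (h0.trans h1) (by positivity))]
      exact mul_le_mul_of_nonneg_right h1 (by positivity)
  have key : ∀ j : ℕ, 1 ≤ j → j < k → (j:ℝ) * (α (j+1) - α j) ≤ α j := by
    intro j hj1 hjk
    have hjk' : j ≤ k := hjk.le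
    have hj1k : j + 1 ≤ k := hjk
    set a := t j with hadef
    set b := t (j+1) with hbdef
    have hamem := htmem j hjk'
    have hbmem := htmem (j+1) hj1k
    have ha1 : -1 < a := by
      have := htmono 0 j (by omega) hjk'
      rwa [ht0] at this
    have hab : a < b := htmono j (j+1) (by omega) hj1k
    have hb1 : b ≤ 1 := hbmem.2
    have ha1' : a ≤ 1 := hamem.2
    have hαa : α j = Real.arcsin a + π/2 := by
      rw [hα j hjk', Real.arccos_neg, Real.arccos_eq_pi_div_two_sub_arcsin]; ring
    have hαb : α (j+1) = Real.arcsin b + π/2 := by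
      rw [hα (j+1) hj1k, Real.arccos_neg, Real.arccos_eq_pi_div_two_sub_arcsin]; ring
    have hIa := hI j hjk'
    have hIb := hI (j+1) hj1k
    push_cast at hIb
    have hint_a : IntervalIntegrable G volume (-1) a := hGint a hamem
    have hint_b : IntervalIntegrable G volume (-1) b := hGint b hbmem
    have hint_ab : IntervalIntegrable G volume a b := by
      refine hint_b.mono_set ?_
      rw [Set.uIcc_of_le hab.le, Set.uIcc_of_le (by linarith : (-1:ℝ) ≤ b)]
      exact Set.Icc_subset_Icc ha1.le le_rfl
    have hIab : ∫ s in a..b, G s = π / k := by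
      have hadd := intervalIntegral.integral_add_adjacent_intervals hint_a hint_ab
      rw [hIa, hIb] at hadd
      have hexp : ((j:ℝ)+1) * (π/k) = (j:ℝ) * (π/k) + π/k := by ring
      linarith [hadd, hexp]
    have hBa : IntervalIntegrable (fun s : ℝ => g a * (1 / Real.sqrt (1 - s ^ 2)))
        volume (-1) a := by
      refine (aux_intFull.const_mul (g a)).mono_set ?_
      rw [Set.uIcc_of_le ha1.le, Set.uIcc_of_le (by norm_num : (-1:ℝ) ≤ 1)]
      exact Set.Icc_subset_Icc le_rfl ha1'
    have hBab : IntervalIntegrable (fun s : ℝ => g a * (1 / Real.sqrt (1 - s ^ 2)))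
        volume a b := by
      refine (aux_intFull.const_mul (g a)).mono_set ?_
      rw [Set.uIcc_of_le hab.le, Set.uIcc_of_le (by norm_num : (-1:ℝ) ≤ 1)]
      exact Set.Icc_subset_Icc ha1.le hb1
    have hupper : (j:ℝ) * (π/k) ≤ g a * (Real.arcsin a + π/2) := by
      have hmono1 : ∫ s in (-1:ℝ)..a, G s
          ≤ ∫ s in (-1:ℝ)..a, g a * (1 / Real.sqrt (1 - s ^ 2)) := by
        refine intervalIntegral.integral_mono_on ha1.le hint_a hBa ?_
        intro x hx
        have hx' : x ∈ Set.Icc (-1:ℝ) 1 := ⟨hx.1, hx.2.trans ha1'⟩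
        have hgx : g x ≤ g a := hgmono hx' hamem hx.2
        have : G x = g x * (1 / Real.sqrt (1 - x ^ 2)) := by
          simp only [hGdef]; rw [div_eq_mul_one_div]
        rw [this]
        exact mul_le_mul_of_nonneg_right hgx (by positivity)
      rw [hIa, intervalIntegral.integral_const_mul,
        aux_integral (le_refl (-1:ℝ)) ha1' ha1.le, Real.arcsin_neg_one] at hmono1
      have heq : g a * (Real.arcsin a - -(π/2)) = g a * (Real.arcsin a + π/2) := by ring
      linarith [hmono1, heq]
    have hlower : g a * (Real.arcsin b - Real.arcsin a) ≤ π/k := by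
      have hmono2 : ∫ s in a..b, g a * (1 / Real.sqrt (1 - s ^ 2))
          ≤ ∫ s in a..b, G s := by
        refine intervalIntegral.integral_mono_on hab.le hBab hint_ab ?_
        intro x hx
        have hx' : x ∈ Set.Icc (-1:ℝ) 1 := ⟨ha1.le.trans hx.1, hx.2.trans hb1⟩
        have hgx : g a ≤ g x := hgmono hamem hx' hx.1
        have : G x = g x * (1 / Real.sqrt (1 - x ^ 2)) := by
          simp only [hGdef]; rw [div_eq_mul_one_div]
        rw [this]
        exact mul_le_mul_of_nonneg_right hgx (by positivity)
      rw [hIab, intervalIntegral.integral_const_mul,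
        aux_integral ha1.le hb1 hab.le] at hmono2
      exact hmono2
    have hga : 0 < g a := by
      rcases (hg0 a hamem).lt_or_eq with h | h
      · exact h
      · exfalso
        have hzero : ∫ s in (-1:ℝ)..a, G s = 0 := by
          have heqz : Set.EqOn G (fun _ => (0:ℝ)) (Set.uIcc (-1:ℝ) a) := by
            intro x hx
            rw [Set.uIcc_of_le ha1.le] at hx
            have hx' : x ∈ Set.Icc (-1:ℝ) 1 := ⟨hx.1, hx.2.trans ha1'⟩
            have h1 : g x ≤ g a := hgmono hx' hamem hx.2
            have h2 : 0 ≤ g x := hg0 x hx'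
            have hgx0 : g x = 0 := le_antisymm (h1.trans_eq h.symm) h2
            simp [hGdef, hgx0]
          rw [intervalIntegral.integral_congr heqz]
          simp
        rw [hIa] at hzero
        have hj1' : (1:ℝ) ≤ (j:ℝ) := by exact_mod_cast hj1
        nlinarith [hzero, hj1', div_pos hπ hk0]
    have hj0 : (0:ℝ) ≤ (j:ℝ) := Nat.cast_nonneg j
    rw [hαa, hαb]
    have hΔ : (Real.arcsin b + π/2) - (Real.arcsin a + π/2)
        = Real.arcsin b - Real.arcsin a := by ring
    rw [hΔ]
    have h3 : g a * ((j:ℝ) * (Real.arcsin b - Real.arcsin a))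
        ≤ g a * (Real.arcsin a + π/2) := by
      have h4 := mul_le_mul_of_nonneg_left hlower hj0
      calc g a * ((j:ℝ) * (Real.arcsin b - Real.arcsin a))
          = (j:ℝ) * (g a * (Real.arcsin b - Real.arcsin a)) := by ring
        _ ≤ (j:ℝ) * (π/k) := h4
        _ ≤ g a * (Real.arcsin a + π/2) := hupper
    exact le_of_mul_le_mul_left h3 hga
  have αpos : ∀ j : ℕ, 1 ≤ j → j ≤ k → 0 < α j := by
    intro j h1 h2
    rw [hα j h2]
    refine Real.arccos_pos.2 ?_
    have := htmono 0 j (by omega) h2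
    rw [ht0] at this; linarith
  constructor
  · intro j hj1 hjk
    have hjpos : (0:ℝ) < (j:ℝ) := by exact_mod_cast hj1
    rw [div_le_div_iff₀ (αpos j hj1 hjk.le) hjpos]
    nlinarith [key j hj1 hjk]
  · intro j hjk
    rcases Nat.eq_zero_or_pos j with h0 | h1
    · subst h0
      have hα0 : α 0 = 0 := by
        rw [hα 0 (by omega), ht0]; norm_num [Real.arccos_one]
      have hα1 : 0 < α 1 := αpos 1 le_rfl (by omega)
      rw [hα0, sub_zero, div_self (ne_of_gt hα1)]
      norm_num
    · have hkey := key j h1 hjk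
      have hp : (0:ℝ) < (j:ℝ) + 1 := by positivity
      rw [div_le_div_iff₀ (αpos (j+1) (by omega) hjk) hp]
      nlinarith [hkey]
end
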